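/- arXiv:1905.08339 — 2 statements merged into one kernel-verified Lean document; each statement's English description precedes it below -/
import Mathlib

section
/- Let α be a finite type, let M : α → ℝ be a probability mass function, and let p ∈ [0,1]. For each w : α define R_w a = p·(if a = w then 1 else 0) + (1-p)·M a. Then the M-average of the entropies of the transition rows is at most the per-step generator entropy: ∑_w M w · (∑_a negMulLog (R_w a)) ≤ negMulLog p + negMulLog (1-p) + (1-p)·∑_a negMulLog (M a). -/
open Finset Real

lemma negMulLog_add_le {s t : ℝ} (hs : 0 ≤ s) (ht : 0 ≤ t) :
    Real.negMulLog (s + t) ≤ Real.negMulLog s + Real.negMulLog t := by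
  rcases eq_or_lt_of_le hs with h | hs'
  · simp [← h, Real.negMulLog_zero]
  rcases eq_or_lt_of_le ht with h | ht'
  · simp [← h, Real.negMulLog_zero]
  have h1 : Real.log s ≤ Real.log (s + t) := Real.log_le_log hs' (by linarith)
  have h2 : Real.log t ≤ Real.log (s + t) := Real.log_le_log ht' (by linarith)
  simp only [Real.negMulLog]
  nlinarith [mul_le_mul_of_nonneg_left h1 hs, mul_le_mul_of_nonneg_left h2 ht]

/-- the `M`-average of the entropies of the transition rows
`R_w a = p·δ_w a + (1-p)·M a` of the repetition kernel is at most the per-step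
generator entropy `H₂(p) + (1-p)·H(M)`. -/
theorem average_row_entropy_le
    {α : Type*} [Fintype α] [DecidableEq α]
    (M : α → ℝ) (hM0 : ∀ a, 0 ≤ M a) (hM1 : ∑ a, M a = 1)
    (p : ℝ) (hp : p ∈ Set.Icc (0 : ℝ) 1)
    (R : α → α → ℝ)
    (hR : ∀ w a, R w a = p * (if a = w then 1 else 0) + (1 - p) * M a) :
    ∑ w, M w * ∑ a, Real.negMulLog (R w a) ≤
      Real.negMulLog p + Real.negMulLog (1 - p)
        + (1 - p) * ∑ a, Real.negMulLog (M a) := by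
  obtain ⟨hp0, hp1⟩ := hp
  set C := Real.negMulLog p + Real.negMulLog (1 - p)
      + (1 - p) * ∑ a, Real.negMulLog (M a) with hC
  have key : ∀ w, ∑ a, Real.negMulLog (R w a) ≤ C := by
    intro w
    have step1 : ∑ a, Real.negMulLog (R w a) ≤
        ∑ a, (Real.negMulLog (p * (if a = w then 1 else 0))
          + Real.negMulLog ((1 - p) * M a)) := by
      apply Finset.sum_le_sum
      intro a _
      rw [hR]
      exact negMulLog_add_le
        (mul_nonneg hp0 (by split <;> norm_num))
        (mul_nonneg (by linarith) (hM0 a))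
    have e1 : ∑ a, Real.negMulLog (p * (if a = w then 1 else 0))
        = Real.negMulLog p := by
      rw [Finset.sum_eq_single w]
      · simp
      · intro b _ hb; simp [hb]
      · simp
    have e2 : ∑ a, Real.negMulLog ((1 - p) * M a)
        = Real.negMulLog (1 - p) + (1 - p) * ∑ a, Real.negMulLog (M a) := by
      simp only [Real.negMulLog_mul]
      rw [Finset.sum_add_distrib, ← Finset.sum_mul, ← Finset.mul_sum, hM1]
      ring
    rw [Finset.sum_add_distrib, e1, e2] at step1
    linarith
  calc ∑ w, M w * ∑ a, Real.negMulLog (R w a)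
      ≤ ∑ w, M w * C := by
        apply Finset.sum_le_sum
        intro w _
        exact mul_le_mul_of_nonneg_left (key w) (hM0 w)
    _ = C := by rw [← Finset.sum_mul, hM1, one_mul]
end

section
/- Let α be a finite type, let M : α → ℝ be a probability mass function with H(M) = ∑_a negMulLog (M a) > 0, and let x ∈ [0,1]. Then there exists p ∈ [0,1] such that negMulLog p + negMulLog (1-p) + (1-p)·H(M) = x·H(M); i.e., the paper's temporal complexity equation x = (H₂(p) + (1-p)·H(M))/H(M) has a solution p ∈ [0,1]. -/
open Finset Real

/-- if `H(M) > 0` and `x ∈ [0,1]`, then there is `p ∈ [0,1]` solving the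
temporal complexity equation `H₂(p) + (1-p)·H(M) = x·H(M)`. -/
theorem exists_repeat_probability
    {α : Type*} [Fintype α]
    (M : α → ℝ) (hM0 : ∀ a, 0 ≤ M a) (hM1 : ∑ a, M a = 1)
    (hH : 0 < ∑ a, Real.negMulLog (M a))
    (x : ℝ) (hx : x ∈ Set.Icc (0 : ℝ) 1) :
    ∃ p ∈ Set.Icc (0 : ℝ) 1,
      Real.negMulLog p + Real.negMulLog (1 - p)
          + (1 - p) * ∑ a, Real.negMulLog (M a)
        = x * ∑ a, Real.negMulLog (M a) := by
  set H := ∑ a, Real.negMulLog (M a) with hHdef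
  set f : ℝ → ℝ := fun p => Real.negMulLog p + Real.negMulLog (1 - p) + (1 - p) * H
    with hf
  have hcont : ContinuousOn f (Set.Icc 0 1) := by
    apply Continuous.continuousOn
    fun_prop
  have h01 : (0:ℝ) ≤ 1 := zero_le_one
  have hsub := intermediate_value_Icc' h01 hcont
  have hf0 : f 0 = H := by simp [hf, Real.negMulLog]
  have hf1 : f 1 = 0 := by simp [hf, Real.negMulLog]
  have hmem : x * H ∈ Set.Icc (f 1) (f 0) := by
    rw [hf0, hf1]
    obtain ⟨hx0, hx1⟩ := hx
    constructor
    · positivity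
    · nlinarith
  obtain ⟨p, hp, hfp⟩ := hsub hmem
  exact ⟨p, hp, hfp⟩
end
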